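/- Hierarchy lemma (upper chain): with T[W] and R as defined from positive definite W, Q and antisymmetric U, one has (1 + T[W]) Tr[W Q⁻¹] ≤ (1 + R) Tr[W Q⁻¹] ≤ 2 Tr[W Q⁻¹], provided R ≤ 1. -/

import Mathlib

open Matrix

/-- the old Mathlib `Matrix.PosSemidef.sqrt` (removed upstream), spelled out verbatim -/
noncomputable def psdSqrt {n : ℕ} {A : Matrix (Fin n) (Fin n) ℝ} (hA : A.PosSemidef) :
    Matrix (Fin n) (Fin n) ℝ :=
  hA.1.eigenvectorUnitary.1 * diagonal (((↑) : ℝ → ℝ) ∘ Real.sqrt ∘ hA.1.eigenvalues) *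
    (star hA.1.eigenvectorUnitary : Matrix (Fin n) (Fin n) ℝ)

theorem psdSqrt_isHermitian {n : ℕ} {A : Matrix (Fin n) (Fin n) ℝ} (hA : A.PosSemidef) :
    (psdSqrt hA).IsHermitian := by
  unfold psdSqrt
  simpa [Matrix.star_eq_conjTranspose] using
    isHermitian_mul_mul_conjTranspose (hA.1.eigenvectorUnitary.1)
      (isHermitian_diagonal (((↑) : ℝ → ℝ) ∘ Real.sqrt ∘ hA.1.eigenvalues))

noncomputable def traceNorm {n : ℕ} (A : Matrix (Fin n) (Fin n) ℝ) : ℝ :=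
  (psdSqrt (Matrix.posSemidef_conjTranspose_mul_self A)).trace

noncomputable def singVals {n : ℕ} (A : Matrix (Fin n) (Fin n) ℝ) : Fin n → ℝ :=
  (psdSqrt_isHermitian (Matrix.posSemidef_conjTranspose_mul_self A)).eigenvalues

noncomputable def opNorm {n : ℕ} (A : Matrix (Fin n) (Fin n) ℝ) : ℝ :=
  ⨆ i, singVals A i

/-- the positive semidefinite square root, extended by `0` off psd matrices -/
noncomputable def mySqrt {n : ℕ} (A : Matrix (Fin n) (Fin n) ℝ) : Matrix (Fin n) (Fin n) ℝ :=
  open Classical in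
  if h : A.PosSemidef then psdSqrt h else 0

/-- the weight-dependent incompatibility measure `T[W]` -/
noncomputable def Tmeas {n : ℕ} (W Q U : Matrix (Fin n) (Fin n) ℝ) : ℝ :=
  traceNorm (mySqrt W * Q⁻¹ * U * Q⁻¹ * mySqrt W) / (W * Q⁻¹).trace

/-- the quantumness measure `R` -/
noncomputable def Rmeas {n : ℕ} (Q U : Matrix (Fin n) (Fin n) ℝ) : ℝ :=
  opNorm (mySqrt Q⁻¹ * U * mySqrt Q⁻¹)

/-!
Put `A = √W √Q⁻¹` and `M = √Q⁻¹ U √Q⁻¹`. Then `√W Q⁻¹ U Q⁻¹ √W = A M Aᵀ` and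
`Tr[W Q⁻¹] = ‖A‖_F²`. Hölder's inequality `‖Y Z‖₁ ≤ ‖Y‖_F ‖Z‖_F` and `‖M B‖_F ≤ ‖M‖_∞ ‖B‖_F`
give `‖A M Aᵀ‖₁ ≤ R ‖A‖_F²`, that is `T[W] ≤ R`, and the chain follows from `R ≤ 1`.
Hölder's inequality comes from writing `‖X‖₁ = Tr[Gᵀ X V]` with `V` orthogonal and `G` a
partial isometry (a polar decomposition), followed by Cauchy–Schwarz for the Frobenius product.
-/

section Frobenius

variable {l m k : Type*} [Fintype l] [Fintype m] [Fintype k]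

noncomputable def frobNorm (A : Matrix m k ℝ) : ℝ :=
  √(Aᵀ * A).trace

lemma trace_transpose_mul_self_nonneg (A : Matrix m k ℝ) : 0 ≤ (Aᵀ * A).trace := by
  rw [← vec_dotProduct_vec]
  exact Finset.sum_nonneg fun _ _ => mul_self_nonneg _

lemma frobNorm_nonneg (A : Matrix m k ℝ) : 0 ≤ frobNorm A :=
  Real.sqrt_nonneg _

lemma frobNorm_sq (A : Matrix m k ℝ) : frobNorm A ^ 2 = (Aᵀ * A).trace :=
  Real.sq_sqrt (trace_transpose_mul_self_nonneg A)

lemma frobNorm_transpose (A : Matrix m k ℝ) : frobNorm Aᵀ = frobNorm A := by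
  rw [frobNorm, frobNorm, transpose_transpose, trace_mul_comm]

lemma trace_transpose_mul_le (A B : Matrix m k ℝ) :
    (Aᵀ * B).trace ≤ frobNorm A * frobNorm B := by
  simpa only [frobNorm, ← vec_dotProduct_vec, dotProduct, sq] using
    Real.sum_mul_le_sqrt_mul_sqrt Finset.univ (vec A) (vec B)

lemma frobNorm_mul_of_mul_transpose_eq_one [DecidableEq k] (Z : Matrix m k ℝ)
    {V : Matrix k k ℝ} (hV : V * Vᵀ = 1) : frobNorm (Z * V) = frobNorm Z := by
  rw [frobNorm, frobNorm, transpose_mul, Matrix.mul_assoc, trace_mul_comm, Matrix.mul_assoc,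
    Matrix.mul_assoc, hV, Matrix.mul_one]

/-- `G * Gᵀ` is an orthogonal projection, so `Gᵀ` does not increase Frobenius norms. -/
lemma frobNorm_transpose_mul_le {G : Matrix l k ℝ} (hG : G * Gᵀ * G = G) (Y : Matrix l m ℝ) :
    frobNorm (Gᵀ * Y) ≤ frobNorm Y := by
  have hG' (X : Matrix k m ℝ) : G * (Gᵀ * (G * X)) = G * X := by
    rw [← Matrix.mul_assoc, ← Matrix.mul_assoc, hG]
  have hdiff : (Y - G * Gᵀ * Y)ᵀ * (Y - G * Gᵀ * Y) = Yᵀ * Y - (Gᵀ * Y)ᵀ * (Gᵀ * Y) := by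
    simp only [transpose_sub, transpose_mul, transpose_transpose, Matrix.sub_mul, Matrix.mul_sub,
      Matrix.mul_assoc, hG']
    abel
  have := trace_transpose_mul_self_nonneg (Y - G * Gᵀ * Y)
  rw [hdiff, trace_sub, sub_nonneg] at this
  exact Real.sqrt_le_sqrt this

lemma sum_le_frobNorm_mul_frobNorm [DecidableEq k] {Y : Matrix l m ℝ} {Z : Matrix m k ℝ}
    {d : k → ℝ} (hd : (Y * Z)ᵀ * (Y * Z) = diagonal fun i => d i ^ 2) :
    ∑ i, d i ≤ frobNorm Y * frobNorm Z := by
  -- `G` is the partial isometry of the polar decomposition `Y * Z = G * diagonal d`;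
  -- since `0⁻¹ = 0`, it vanishes on the zero columns of `Y * Z`.
  set G := Y * Z * diagonal fun i => (d i)⁻¹
  have hGYZ : Gᵀ * (Y * Z) = diagonal d := by
    rw [transpose_mul, diagonal_transpose, Matrix.mul_assoc, hd, diagonal_mul_diagonal]
    congr 1; funext i
    rcases eq_or_ne (d i) 0 with h | h <;> field_simp [h]
  have hGG : Gᵀ * G = diagonal fun i => d i * (d i)⁻¹ := by
    rw [← Matrix.mul_assoc, hGYZ, diagonal_mul_diagonal]
  have hG : G * Gᵀ * G = G := by
    rw [Matrix.mul_assoc, hGG, Matrix.mul_assoc, diagonal_mul_diagonal]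
    congr 2; funext i
    rcases eq_or_ne (d i) 0 with h | h <;> field_simp [h]
  calc ∑ i, d i = (((Gᵀ * Y)ᵀ)ᵀ * Z).trace := by
        rw [transpose_transpose, Matrix.mul_assoc, hGYZ, trace_diagonal]
    _ ≤ frobNorm (Gᵀ * Y)ᵀ * frobNorm Z := trace_transpose_mul_le _ _
    _ ≤ frobNorm Y * frobNorm Z := by
        rw [frobNorm_transpose]
        exact mul_le_mul_of_nonneg_right (frobNorm_transpose_mul_le hG Y) (frobNorm_nonneg Z)

end Frobenius

section SingularValues

variable {n : ℕ}

lemma psdSqrt_posSemidef {A : Matrix (Fin n) (Fin n) ℝ} (hA : A.PosSemidef) :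
    (psdSqrt hA).PosSemidef := by
  have hD : (diagonal (((↑) : ℝ → ℝ) ∘ Real.sqrt ∘ hA.1.eigenvalues)).PosSemidef :=
    posSemidef_diagonal_iff.mpr fun i => Real.sqrt_nonneg _
  unfold psdSqrt
  simpa [star_eq_conjTranspose] using hD.mul_mul_conjTranspose_same hA.1.eigenvectorUnitary.1

lemma psdSqrt_mul_self {A : Matrix (Fin n) (Fin n) ℝ} (hA : A.PosSemidef) :
    psdSqrt hA * psdSqrt hA = A := by
  have hD : diagonal (((↑) : ℝ → ℝ) ∘ Real.sqrt ∘ hA.1.eigenvalues) *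
      diagonal (((↑) : ℝ → ℝ) ∘ Real.sqrt ∘ hA.1.eigenvalues) =
      diagonal (RCLike.ofReal ∘ hA.1.eigenvalues) := by
    rw [diagonal_mul_diagonal]
    congr 1; funext i
    simp [Real.mul_self_sqrt (hA.eigenvalues_nonneg i)]
  have := congrArg (Unitary.conjStarAlgAut ℝ _ hA.1.eigenvectorUnitary) hD
  rwa [map_mul, ← hA.1.spectral_theorem] at this

lemma singVals_nonneg (X : Matrix (Fin n) (Fin n) ℝ) (i : Fin n) : 0 ≤ singVals X i :=
  (psdSqrt_posSemidef (posSemidef_conjTranspose_mul_self X)).eigenvalues_nonneg i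

lemma singVals_le_opNorm (X : Matrix (Fin n) (Fin n) ℝ) (i : Fin n) : singVals X i ≤ opNorm X :=
  le_ciSup (Set.finite_range _).bddAbove i

lemma opNorm_nonneg (X : Matrix (Fin n) (Fin n) ℝ) : 0 ≤ opNorm X :=
  Real.iSup_nonneg (singVals_nonneg X)

lemma traceNorm_eq_sum_singVals (X : Matrix (Fin n) (Fin n) ℝ) :
    traceNorm X = ∑ i, singVals X i :=
  (psdSqrt_isHermitian (posSemidef_conjTranspose_mul_self X)).trace_eq_sum_eigenvalues

lemma exists_orthogonal_transpose_mul_self_eq (X : Matrix (Fin n) (Fin n) ℝ) :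
    ∃ V : Matrix (Fin n) (Fin n) ℝ, Vᵀ * V = 1 ∧ V * Vᵀ = 1 ∧
      Xᵀ * X = V * diagonal (fun i => singVals X i ^ 2) * Vᵀ := by
  have hXX := posSemidef_conjTranspose_mul_self X
  have hP := psdSqrt_isHermitian hXX
  set V : Matrix (Fin n) (Fin n) ℝ := (hP.eigenvectorUnitary : Matrix (Fin n) (Fin n) ℝ)
  have hVV : Vᵀ * V = 1 := by
    simpa [V, star_eq_conjTranspose] using mem_unitaryGroup_iff'.mp hP.eigenvectorUnitary.2
  have hspec : psdSqrt hXX = V * diagonal (singVals X) * Vᵀ := by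
    simpa [Unitary.conjStarAlgAut_apply, star_eq_conjTranspose, V, singVals] using
      hP.spectral_theorem
  refine ⟨V, hVV, mul_eq_one_comm.mp hVV, ?_⟩
  calc Xᵀ * X = psdSqrt hXX * psdSqrt hXX := (psdSqrt_mul_self hXX).symm
    _ = V * (diagonal (singVals X) * (Vᵀ * V) * diagonal (singVals X)) * Vᵀ := by
        rw [hspec]; simp only [Matrix.mul_assoc]
    _ = V * diagonal (fun i => singVals X i ^ 2) * Vᵀ := by
        rw [hVV, Matrix.mul_one, diagonal_mul_diagonal]; simp only [sq]

lemma frobNorm_mul_le (M B : Matrix (Fin n) (Fin n) ℝ) :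
    frobNorm (M * B) ≤ opNorm M * frobNorm B := by
  obtain ⟨V, -, hVV, hMM⟩ := exists_orthogonal_transpose_mul_self_eq M
  set t := opNorm M
  have hgap : (diagonal fun i => t ^ 2 - singVals M i ^ 2).PosSemidef :=
    posSemidef_diagonal_iff.mpr fun i => sub_nonneg.mpr <|
      pow_le_pow_left₀ (singVals_nonneg M i) (singVals_le_opNorm M i) 2
  have hgap' : V * (diagonal fun i => t ^ 2 - singVals M i ^ 2) * Vᵀ = t ^ 2 • 1 - Mᵀ * M := by
    have hsplit : (diagonal fun i => t ^ 2 - singVals M i ^ 2) =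
        t ^ 2 • 1 - diagonal fun i => singVals M i ^ 2 := by
      rw [smul_one_eq_diagonal, diagonal_sub]
    rw [hMM, hsplit, Matrix.mul_sub, Matrix.sub_mul,
      Matrix.mul_smul, Matrix.smul_mul, Matrix.mul_one, hVV]
  have hnonneg := ((hgap.mul_mul_conjTranspose_same V).conjTranspose_mul_mul_same B).trace_nonneg
  rw [conjTranspose_eq_transpose_of_trivial, conjTranspose_eq_transpose_of_trivial, hgap',
    Matrix.mul_sub, Matrix.sub_mul, trace_sub, Matrix.mul_smul, Matrix.smul_mul, Matrix.mul_one,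
    trace_smul, ← Matrix.mul_assoc, Matrix.mul_assoc _ M, ← transpose_mul] at hnonneg
  refine le_of_pow_le_pow_left₀ two_ne_zero (mul_nonneg (opNorm_nonneg M) (frobNorm_nonneg B)) ?_
  rw [mul_pow, frobNorm_sq, frobNorm_sq]
  simpa [sub_nonneg] using hnonneg

lemma traceNorm_mul_le (Y Z : Matrix (Fin n) (Fin n) ℝ) :
    traceNorm (Y * Z) ≤ frobNorm Y * frobNorm Z := by
  obtain ⟨V, hVV, hVV', hYZ⟩ := exists_orthogonal_transpose_mul_self_eq (Y * Z)
  have hdiag : (Y * (Z * V))ᵀ * (Y * (Z * V)) = diagonal fun i => singVals (Y * Z) i ^ 2 := by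
    calc (Y * (Z * V))ᵀ * (Y * (Z * V)) = Vᵀ * ((Y * Z)ᵀ * (Y * Z)) * V := by
          simp only [transpose_mul, Matrix.mul_assoc]
      _ = _ := by
          rw [hYZ]
          simp only [Matrix.mul_assoc, hVV, Matrix.mul_one]
          rw [← Matrix.mul_assoc, hVV, Matrix.one_mul]
  rw [traceNorm_eq_sum_singVals, ← frobNorm_mul_of_mul_transpose_eq_one Z hVV']
  exact sum_le_frobNorm_mul_frobNorm hdiag

lemma traceNorm_mul_mul_transpose_le (A M : Matrix (Fin n) (Fin n) ℝ) :
    traceNorm (A * M * Aᵀ) ≤ opNorm M * frobNorm A ^ 2 :=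
  calc traceNorm (A * M * Aᵀ) ≤ frobNorm A * frobNorm (M * Aᵀ) := by
        rw [Matrix.mul_assoc]; exact traceNorm_mul_le _ _
    _ ≤ frobNorm A * (opNorm M * frobNorm Aᵀ) := by
        gcongr
        · exact frobNorm_nonneg A
        · exact frobNorm_mul_le M Aᵀ
    _ = opNorm M * frobNorm A ^ 2 := by rw [frobNorm_transpose]; ring

end SingularValues

section Measures

variable {n : ℕ}

lemma mySqrt_mul_self {A : Matrix (Fin n) (Fin n) ℝ} (hA : A.PosSemidef) :
    mySqrt A * mySqrt A = A := by
  rw [mySqrt, dif_pos hA, psdSqrt_mul_self]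

lemma mySqrt_transpose {A : Matrix (Fin n) (Fin n) ℝ} (hA : A.PosSemidef) :
    (mySqrt A)ᵀ = mySqrt A := by
  rw [mySqrt, dif_pos hA, ← conjTranspose_eq_transpose_of_trivial]
  exact psdSqrt_isHermitian hA

lemma trace_mul_eq_frobNorm_sq {A B : Matrix (Fin n) (Fin n) ℝ} (hA : A.PosSemidef)
    (hB : B.PosSemidef) : (A * B).trace = frobNorm (mySqrt A * mySqrt B) ^ 2 := by
  rw [frobNorm_sq, transpose_mul, mySqrt_transpose hA, mySqrt_transpose hB, Matrix.mul_assoc,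
    ← Matrix.mul_assoc (mySqrt A), mySqrt_mul_self hA, ← Matrix.mul_assoc, trace_mul_cycle,
    mySqrt_mul_self hB, trace_mul_comm]

lemma traceNorm_le_Rmeas_mul_trace {W Q : Matrix (Fin n) (Fin n) ℝ} (hW : W.PosSemidef)
    (hQ : Q.PosSemidef) (U : Matrix (Fin n) (Fin n) ℝ) :
    traceNorm (mySqrt W * Q⁻¹ * U * Q⁻¹ * mySqrt W) ≤ Rmeas Q U * (W * Q⁻¹).trace := by
  set A := mySqrt W * mySqrt Q⁻¹
  have hsandwich :
      mySqrt W * Q⁻¹ * U * Q⁻¹ * mySqrt W = A * (mySqrt Q⁻¹ * U * mySqrt Q⁻¹) * Aᵀ := by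
    conv_lhs => rw [← mySqrt_mul_self hQ.inv]
    simp only [A, transpose_mul, mySqrt_transpose hW, mySqrt_transpose hQ.inv, Matrix.mul_assoc]
  rw [hsandwich, trace_mul_eq_frobNorm_sq hW hQ.inv]
  exact traceNorm_mul_mul_transpose_le _ _

lemma Tmeas_mul_trace_le {W Q : Matrix (Fin n) (Fin n) ℝ} (hW : W.PosSemidef)
    (hQ : Q.PosSemidef) (U : Matrix (Fin n) (Fin n) ℝ) :
    Tmeas W Q U * (W * Q⁻¹).trace ≤ Rmeas Q U * (W * Q⁻¹).trace := by
  rcases eq_or_ne (W * Q⁻¹).trace 0 with h | h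
  · simp [h]
  · rw [Tmeas, div_mul_cancel₀ _ h]
    exact traceNorm_le_Rmeas_mul_trace hW hQ U

end Measures

theorem hierarchy_upper_chain_general {n : ℕ} (W Q U : Matrix (Fin n) (Fin n) ℝ)
    (hW : W.PosDef) (hQ : Q.PosDef) (hR : Rmeas Q U ≤ 1) :
    (1 + Tmeas W Q U) * (W * Q⁻¹).trace ≤ (1 + Rmeas Q U) * (W * Q⁻¹).trace ∧
      (1 + Rmeas Q U) * (W * Q⁻¹).trace ≤ 2 * (W * Q⁻¹).trace := by
  have htrace : 0 ≤ (W * Q⁻¹).trace := by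
    rw [trace_mul_eq_frobNorm_sq hW.posSemidef hQ.posSemidef.inv]
    positivity
  have hT := Tmeas_mul_trace_le hW.posSemidef hQ.posSemidef U
  constructor <;> nlinarith

/-- Hierarchy (upper chain): (1 + T[W])·Tr[WQ⁻¹] ≤ (1 + R)·Tr[WQ⁻¹] ≤ 2·Tr[WQ⁻¹] when R ≤ 1. -/
theorem hierarchy_upper_chain {n : ℕ} (W Q U : Matrix (Fin n) (Fin n) ℝ)
    (hW : W.PosDef) (hQ : Q.PosDef) (hU : Uᵀ = -U) (hR : Rmeas Q U ≤ 1) :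
    (1 + Tmeas W Q U) * (W * Q⁻¹).trace ≤ (1 + Rmeas Q U) * (W * Q⁻¹).trace ∧
      (1 + Rmeas Q U) * (W * Q⁻¹).trace ≤ 2 * (W * Q⁻¹).trace :=
  hierarchy_upper_chain_general W Q U hW hQ hR
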